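/- For all real numbers t > 0, all integers n ≥ 0, and all real r > 0, one has t^((n+1)/(n+2)) ≤ e^(r+2) · t + (n+1)^(-(r+2)). -/

import Mathlib

/-!
With `q = n + 1` and `c = e^(r+2)` the exponent is `q/(q+1)`, and `t^(q/(q+1)) ≤ c t + c^(-q)`
holds for every `c > 0`: above the crossover point `t = c^(-(q+1))` the linear term dominates,
below it the power is at most `c^(-q)`. Finally `e^(-(r+2)(n+1)) ≤ (n+1)^(-(r+2))` because
`log (n+1) ≤ n+1`.
-/

theorem Real.rpow_div_add_one_le_mul_add_rpow_neg {t q c : ℝ} (ht : 0 ≤ t) (hq : 0 < q)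
    (hc : 0 < c) : t ^ (q / (q + 1)) ≤ c * t + c ^ (-q) := by
  have hq1 : 0 < q + 1 := by linarith
  rcases le_or_gt (c ^ (-(q + 1))) t with hbig | hsmall
  · have htpos : 0 < t := (Real.rpow_pos_of_pos hc _).trans_le hbig
    have hroot : t ^ (-(q + 1)⁻¹) ≤ c := by
      calc t ^ (-(q + 1)⁻¹)
          ≤ (c ^ (-(q + 1))) ^ (-(q + 1)⁻¹) :=
            Real.rpow_le_rpow_of_nonpos (Real.rpow_pos_of_pos hc _) hbig
              (neg_nonpos.mpr (inv_nonneg.mpr hq1.le))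
        _ = c := by
          rw [← Real.rpow_mul hc.le, neg_mul_neg, mul_inv_cancel₀ hq1.ne', Real.rpow_one]
    calc t ^ (q / (q + 1))
        = t ^ (-(q + 1)⁻¹) * t := by
          rw [← Real.rpow_add_one htpos.ne']
          congr 1
          field_simp
          ring
      _ ≤ c * t := mul_le_mul_of_nonneg_right hroot ht
      _ ≤ c * t + c ^ (-q) := le_add_of_nonneg_right (Real.rpow_nonneg hc.le _)
  · calc t ^ (q / (q + 1))
        ≤ (c ^ (-(q + 1))) ^ (q / (q + 1)) := Real.rpow_le_rpow ht hsmall.le (by positivity)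
      _ = c ^ (-q) := by
          rw [← Real.rpow_mul hc.le]
          congr 1
          field_simp
      _ ≤ c * t + c ^ (-q) := le_add_of_nonneg_left (mul_nonneg hc.le ht)

theorem Real.exp_rpow_neg_le_rpow_neg {q s : ℝ} (hq : 0 < q) (hs : 0 ≤ s) :
    Real.exp s ^ (-q) ≤ q ^ (-s) := by
  rw [← Real.exp_mul, Real.rpow_def_of_pos hq, Real.exp_le_exp]
  have hlog : Real.log q ≤ q := (Real.log_le_sub_one_of_pos hq).trans (by linarith)
  nlinarith

theorem stmt_0 (t : ℝ) (ht : 0 < t) (n : ℕ) (r : ℝ) (hr : 0 < r) :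
    t ^ (((n : ℝ) + 1) / ((n : ℝ) + 2)) ≤
      Real.exp (r + 2) * t + ((n : ℝ) + 1) ^ (-(r + 2)) := by
  have hq : (0 : ℝ) < n + 1 := by positivity
  have hexponent : ((n : ℝ) + 1) / ((n : ℝ) + 2) = ((n : ℝ) + 1) / (((n : ℝ) + 1) + 1) := by ring
  calc t ^ (((n : ℝ) + 1) / ((n : ℝ) + 2))
      ≤ Real.exp (r + 2) * t + Real.exp (r + 2) ^ (-((n : ℝ) + 1)) := by
        rw [hexponent]
        exact Real.rpow_div_add_one_le_mul_add_rpow_neg ht.le hq (Real.exp_pos _)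
    _ ≤ Real.exp (r + 2) * t + ((n : ℝ) + 1) ^ (-(r + 2)) := by
        gcongr
        exact Real.exp_rpow_neg_le_rpow_neg hq (by linarith)
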